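/- Let T be a table with suppressed cell set E and suppressed graph H, and let Q ⊆ E. Then Q is totally protected in T if and only if both of the following hold: (1) every edge in Q has its two endpoints mutually reachable in H (i.e., the edges of Q are contained in the strongly connected components of H); and (2) for every strongly connected component D of H, the undirected graph with vertex set D and edge set E(D) − Q (directions disregarded) is connected. -/

import Mathlib

/-- A two-dimensional table: values, lower/upper bounds, and a set of suppressed cells. -/
structure Table (R C : Type*) where
  val : R × C → ℝ
  lo : R × C → ℝ
  hi : R × C → ℝ
  sup : Set (R × C)
  lo_le : ∀ e, lo e ≤ val e
  le_hi : ∀ e, val e ≤ hi e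
  lo_lt_hi : ∀ e, lo e < hi e

variable {R C : Type*}

/-- A bounded feasible assignment of a table. -/
def BFA [Fintype R] [Fintype C] (T : Table R C) (x : R × C → ℝ) : Prop :=
  (∀ e, e ∉ T.sup → x e = T.val e) ∧
  (∀ e ∈ T.sup, T.lo e ≤ x e ∧ x e ≤ T.hi e) ∧
  (∀ i : R, ∑ j, x (i, j) = ∑ j, T.val (i, j)) ∧
  (∀ j : C, ∑ i, x (i, j) = ∑ i, T.val (i, j))

/-- One traversable step in the mixed graph with edge set `S`: the edge of a cell `e`
may be traversed from its row endpoint to its column endpoint iff `val e < hi e`,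
and from its column endpoint to its row endpoint iff `lo e < val e`. -/
def MStep (T : Table R C) (S : Set (R × C)) (v w : R ⊕ C) : Prop :=
  ∃ e ∈ S, (T.val e < T.hi e ∧ v = Sum.inl e.1 ∧ w = Sum.inr e.2) ∨
           (T.lo e < T.val e ∧ v = Sum.inr e.2 ∧ w = Sum.inl e.1)

/-- Reachability along traversable paths in the mixed graph with edge set `S`. -/
def MReach (T : Table R C) (S : Set (R × C)) : (R ⊕ C) → (R ⊕ C) → Prop :=
  Relation.ReflTransGen (MStep T S)

/-- Mutual reachability in the mixed graph with edge set `S`. -/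
def MutReach (T : Table R C) (S : Set (R × C)) (v w : R ⊕ C) : Prop :=
  MReach T S v w ∧ MReach T S w v

/-- `D` is a strongly connected component of the mixed graph with edge set `S`:
an equivalence class of mutual reachability. -/
def IsSCC (T : Table R C) (S : Set (R × C)) (D : Set (R ⊕ C)) : Prop :=
  ∃ v, D = {w | MutReach T S v w}

/-- Direction-blind adjacency via an edge in `S`. -/
def Adj (S : Set (R × C)) (v w : R ⊕ C) : Prop :=
  ∃ e ∈ S, (v = Sum.inl e.1 ∧ w = Sum.inr e.2) ∨ (v = Sum.inr e.2 ∧ w = Sum.inl e.1)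

/-- Direction-blind connectivity via edges in `S`. -/
def Conn (S : Set (R × C)) : (R ⊕ C) → (R ⊕ C) → Prop :=
  Relation.ReflTransGen (Adj S)

/-- `D` is a connected component of the (direction-blind) graph with edge set `S`. -/
def IsCC (S : Set (R × C)) (D : Set (R ⊕ C)) : Prop :=
  ∃ v, D = {w | Conn S v w}

/-- The edges of `S` with both endpoints in the vertex set `D`. -/
def EdgesIn (S : Set (R × C)) (D : Set (R ⊕ C)) : Set (R × C) :=
  {e | e ∈ S ∧ Sum.inl e.1 ∈ D ∧ Sum.inr e.2 ∈ D}

/-- All vertices of `D` are joined by direction-blind paths using edges in `S`. -/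
def ConnectedOn (S : Set (R × C)) (D : Set (R ⊕ C)) : Prop :=
  ∀ v ∈ D, ∀ w ∈ D, Conn S v w

/-- `F` is entire: it is the sum of a power series centered at some point with
infinite radius of convergence. -/
def Entire {ι : Type*} [Fintype ι] (F : (ι → ℝ) → ℝ) : Prop :=
  ∃ (p : FormalMultilinearSeries ℝ (ι → ℝ) ℝ) (c : ι → ℝ),
    HasFPowerSeriesOnBall F p c ⊤

/-- `F x` depends only on the coordinates `x e` with `e ∈ S`. -/
def DependsOnlyOn {ι : Type*} (F : (ι → ℝ) → ℝ) (S : Set ι) : Prop :=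
  ∀ x y : ι → ℝ, (∀ e ∈ S, x e = y e) → F x = F y

/-- `S` is the effective area of `F`: the smallest set of coordinates that `F`
depends on. -/
def IsEA {ι : Type*} (F : (ι → ℝ) → ℝ) (S : Set ι) : Prop :=
  DependsOnlyOn F S ∧ ∀ S', DependsOnlyOn F S' → S ⊆ S'

/-- `F` takes the same value at every bounded feasible assignment of `T`. -/
def TableInvariant [Fintype R] [Fintype C] (T : Table R C) (F : (R × C → ℝ) → ℝ) : Prop :=
  ∀ x y, BFA T x → BFA T y → F x = F y

/-- `Q` is totally protected in `T`: there is no nonconstant analytic invariant of `T`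
whose effective area is contained in `Q`. -/
def TotallyProtected [Fintype R] [Fintype C] (T : Table R C) (Q : Set (R × C)) : Prop :=
  ¬ ∃ (F : (R × C → ℝ) → ℝ) (S : Set (R × C)),
      Entire F ∧ DependsOnlyOn F T.sup ∧ TableInvariant T F ∧
      IsEA F S ∧ S ⊆ Q ∧ S.Nonempty

/-!
The difference of two bounded feasible assignments is a circulation on the complete bipartite graph
on `R ⊕ C`, and it can move a suppressed cell only in a direction in which the cell is not at its
bound, i.e. along the edge of `H` in its direction. Pairing a circulation with the coboundary of the
indicator of a vertex set `A` gives zero; when `A` is closed under the steps of `H`, every term has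
the same sign, so no cell crossing `A` moves. Taking for `A` the vertices reachable from a point
shows that only cells inside strongly connected components move.

Necessity: if an edge `e ∈ Q` joins two components, `x ↦ x e` is a linear invariant; if removing
`Q` disconnects a component `D`, the net flow out of one side `A` of `D` through the edges of `D` is
a linear invariant, supported on `Q` and nonzero because some edge of `H` leaves `A` inside `D`.

Sufficiency: under (1) and (2) each `e ∈ Q` closes a cycle in its component that avoids the rest of
`Q`, giving a circulation equal to `1` at `e` and `0` on `Q \ {e}`. Summing cycles of `H` produces a
feasible assignment strictly inside the bounds at every cell of every component, and around it these
circulations realise every small change of the `Q`-coordinates. An analytic invariant depending only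
on `Q` is therefore locally constant, hence constant, so its effective area is empty.
-/

open Finset Filter Topology Relation

theorem Relation.ReflTransGen.exists_mem_not_mem {α : Type*} {r : α → α → Prop} {s : Set α}
    {a b : α} (h : ReflTransGen r a b) (ha : a ∈ s) (hb : b ∉ s) :
    ∃ x y, ReflTransGen r a x ∧ x ∈ s ∧ r x y ∧ y ∉ s ∧ ReflTransGen r y b := by
  induction h with
  | refl => exact absurd ha hb
  | @tail c b hac hcb ih =>
    by_cases hc : c ∈ s
    · exact ⟨c, b, hac, hc, hcb, hb, .refl⟩
    · obtain ⟨x, y, hax, hx, hxy, hy, hyc⟩ := ih hc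
      exact ⟨x, y, hax, hx, hxy, hy, hyc.tail hcb⟩

theorem eventually_lt_add_mul {lo a d : ℝ} (h : lo < a ∨ lo ≤ a ∧ 0 < d) :
    ∀ᶠ t in 𝓝[>] 0, lo < a + t * d := by
  rcases h with h | ⟨h, hd⟩
  · have hlim : Tendsto (fun t => a + t * d) (𝓝[>] 0) (𝓝 a) :=
      tendsto_nhdsWithin_of_tendsto_nhds (by simpa using (Continuous.tendsto (by fun_prop) 0 :
        Tendsto (fun t : ℝ => a + t * d) _ _))
    exact hlim.eventually_const_lt h
  · filter_upwards [self_mem_nhdsWithin] with t (ht : 0 < t)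
    exact lt_add_of_le_of_pos h (mul_pos ht hd)

theorem eventually_mem_Ioo_add_mul {lo a hi d : ℝ} (hla : lo ≤ a) (hah : a ≤ hi)
    (hlo : lo < a ∨ 0 < d) (hhi : a < hi ∨ d < 0) :
    ∀ᶠ t in 𝓝[>] 0, a + t * d ∈ Set.Ioo lo hi := by
  have hupper := eventually_lt_add_mul (lo := -hi) (a := -a) (d := -d)
    (hhi.imp neg_lt_neg fun h => ⟨neg_le_neg hah, neg_pos.2 h⟩)
  filter_upwards [eventually_lt_add_mul (hlo.imp_right fun h => ⟨hla, h⟩), hupper] with t h₁ h₂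
  exact ⟨h₁, by linarith⟩

section Invariants

variable {ι : Type*} [Fintype ι]

theorem entire_dotProduct (c : ι → ℝ) : Entire (c ⬝ᵥ ·) :=
  ⟨_, 0, (LinearMap.toContinuousLinearMap (dotProductBilin ℝ ℝ c)).hasFPowerSeriesOnBall 0⟩

theorem dependsOnlyOn_dotProduct (c : ι → ℝ) : DependsOnlyOn (c ⬝ᵥ ·) (Function.support c) :=
  fun x y hxy => sum_congr rfl fun g _ => by
    by_cases hg : c g = 0
    · simp [hg]
    · rw [hxy g hg]

theorem isEA_dotProduct [DecidableEq ι] (c : ι → ℝ) : IsEA (c ⬝ᵥ ·) (Function.support c) := by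
  refine ⟨dependsOnlyOn_dotProduct c, fun S hS g hg => by_contra fun hgS => hg ?_⟩
  simpa using (hS 0 (Pi.single g 1) fun e he => by simp [ne_of_mem_of_not_mem he hgS]).symm

theorem Entire.eq_of_eventually_eq {F : (ι → ℝ) → ℝ} (hF : Entire F) {x₀ : ι → ℝ}
    (h : ∀ᶠ u in 𝓝 x₀, F u = F x₀) (u : ι → ℝ) : F u = F x₀ := by
  obtain ⟨p, c, hp⟩ := hF
  have hFan : AnalyticOnNhd ℝ F Set.univ := by simpa [Metric.eball_top] using hp.analyticOnNhd
  exact congrFun (hFan.eq_of_eventuallyEq analyticOnNhd_const h) u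

end Invariants

section Flows

def coboundary (φ : R ⊕ C → ℝ) (g : R × C) : ℝ := φ (.inl g.1) - φ (.inr g.2)

theorem coboundary_indicator_eq_zero_iff {A : Set (R ⊕ C)} {g : R × C} :
    coboundary (A.indicator 1) g = 0 ↔ (Sum.inl g.1 ∈ A ↔ Sum.inr g.2 ∈ A) := by
  by_cases hl : Sum.inl g.1 ∈ A <;> by_cases hr : Sum.inr g.2 ∈ A <;> simp [coboundary, hl, hr]

variable [Fintype R] [Fintype C]

/-- The net outflow of a flow on the complete bipartite graph on `R ⊕ C`, a positive value on a
cell counting as flow from its row to its column. -/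
def netOut : (R × C → ℝ) →ₗ[ℝ] (R ⊕ C → ℝ) where
  toFun z := Sum.elim (fun i => ∑ j, z (i, j)) (fun j => -∑ i, z (i, j))
  map_add' z w := by ext (i | j) <;> simp [sum_add_distrib, add_comm]
  map_smul' c z := by ext (i | j) <;> simp [mul_sum]

@[simp] theorem netOut_inl (z : R × C → ℝ) (i : R) : netOut z (.inl i) = ∑ j, z (i, j) := rfl

@[simp] theorem netOut_inr (z : R × C → ℝ) (j : C) : netOut z (.inr j) = -∑ i, z (i, j) := rfl

theorem netOut_single [DecidableEq R] [DecidableEq C] (e : R × C) :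
    netOut (Pi.single e 1) = Pi.single (.inl e.1) 1 - Pi.single (.inr e.2) 1 := by
  ext (i | j)
  · by_cases h : i = e.1 <;> simp [Pi.single_apply, Prod.ext_iff, h]
  · by_cases h : j = e.2 <;> simp [Pi.single_apply, Prod.ext_iff, h]

theorem sum_coboundary_mul (φ : R ⊕ C → ℝ) (z : R × C → ℝ) :
    ∑ g, coboundary φ g * z g = ∑ v, φ v * netOut z v := by
  simp only [coboundary, sub_mul, sum_sub_distrib, Fintype.sum_sum_type, netOut_inl, netOut_inr,
    mul_neg, sum_neg_distrib, ← sub_eq_add_neg, mul_sum, Fintype.sum_prod_type]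
  exact congrArg _ sum_comm

theorem sum_coboundary_mul_eq_zero {z : R × C → ℝ} (hz : netOut z = 0) (φ : R ⊕ C → ℝ) :
    ∑ g, coboundary φ g * z g = 0 := by
  simp [sum_coboundary_mul, hz]

theorem exists_netOut_eq_of_reflTransGen [DecidableEq R] [DecidableEq C]
    {r : R ⊕ C → R ⊕ C → Prop} {P N : Set (R × C)}
    (hr : ∀ v w, r v w → ∃ e,
      (e ∈ P ∧ v = .inl e.1 ∧ w = .inr e.2) ∨ (e ∈ N ∧ v = .inr e.2 ∧ w = .inl e.1))
    {a b : R ⊕ C} (h : ReflTransGen r a b) :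
    ∃ z, netOut z = Pi.single a 1 - Pi.single b 1 ∧
      (∀ g, 0 < z g → g ∈ P) ∧ ∀ g, z g < 0 → g ∈ N := by
  induction h with
  | refl => exact ⟨0, by simp, by simp, by simp⟩
  | tail _ hvw ih =>
    obtain ⟨z, hz, hP, hN⟩ := ih
    obtain ⟨e, ⟨he, rfl, rfl⟩ | ⟨he, rfl, rfl⟩⟩ := hr _ _ hvw
    · refine ⟨z + Pi.single e 1, by rw [map_add, hz, netOut_single]; abel, fun g hg => ?_,
        fun g hg => ?_⟩
      · by_cases hge : g = e
        · exact hge ▸ he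
        · exact hP g (by simpa [hge] using hg)
      · by_cases hge : g = e
        · subst hge; exact hN g (by simp at hg; linarith)
        · exact hN g (by simpa [hge] using hg)
    · refine ⟨z - Pi.single e 1, by rw [map_sub, hz, netOut_single]; abel, fun g hg => ?_,
        fun g hg => ?_⟩
      · by_cases hge : g = e
        · subst hge; exact hP g (by simp at hg; linarith)
        · exact hP g (by simpa [hge] using hg)
      · by_cases hge : g = e
        · exact hge ▸ he
        · exact hN g (by simpa [hge] using hg)

end Flows

section Components

variable {T : Table R C} {S : Set (R × C)} {D : Set (R ⊕ C)} {v w : R ⊕ C}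

theorem mutReach_equivalence : Equivalence (MutReach T S) where
  refl _ := ⟨.refl, .refl⟩
  symm h := ⟨h.2, h.1⟩
  trans h h' := ⟨h.1.trans h'.1, h'.2.trans h.2⟩

def Table.movable (T : Table R C) : Set (R × C) :=
  {g | g ∈ T.sup ∧ MutReach T T.sup (.inl g.1) (.inr g.2)}

theorem IsSCC.mutReach (hD : IsSCC T S D) (hv : v ∈ D) (hw : w ∈ D) : MutReach T S v w := by
  obtain ⟨u, rfl⟩ := hD
  exact mutReach_equivalence.trans (mutReach_equivalence.symm hv) hw

theorem IsSCC.mem_of_mutReach (hD : IsSCC T S D) (hv : v ∈ D) (hvw : MutReach T S v w) : w ∈ D := by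
  obtain ⟨u, rfl⟩ := hD
  exact mutReach_equivalence.trans hv hvw

theorem IsSCC.mem_iff_of_mutReach (hD : IsSCC T S D) {g : R × C}
    (hg : MutReach T S (.inl g.1) (.inr g.2)) : Sum.inl g.1 ∈ D ↔ Sum.inr g.2 ∈ D :=
  ⟨fun h => hD.mem_of_mutReach h hg, fun h => hD.mem_of_mutReach h (mutReach_equivalence.symm hg)⟩

theorem conn_inl_iff_conn_inr {a : R ⊕ C} {g : R × C} (hg : g ∈ S) :
    Conn S a (.inl g.1) ↔ Conn S a (.inr g.2) :=
  ⟨fun h => h.tail ⟨g, hg, .inl ⟨rfl, rfl⟩⟩, fun h => h.tail ⟨g, hg, .inr ⟨rfl, rfl⟩⟩⟩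

theorem Conn.mem_of_subset_edgesIn {S' : Set (R × C)} (hS' : S' ⊆ EdgesIn S D) {a w : R ⊕ C}
    (h : Conn S' a w) (ha : a ∈ D) : w ∈ D := by
  rcases h.cases_tail with rfl | ⟨c, -, e, he, ⟨-, rfl⟩ | ⟨-, rfl⟩⟩
  exacts [ha, (hS' he).2.2, (hS' he).2.1]

theorem IsSCC.exists_edgesIn_not_mem_iff {A : Set (R ⊕ C)} (hD : IsSCC T T.sup D) (hAD : A ⊆ D)
    {a b : R ⊕ C} (ha : a ∈ A) (hb : b ∈ D) (hbA : b ∉ A) :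
    ∃ g ∈ EdgesIn T.sup D, ¬(Sum.inl g.1 ∈ A ↔ Sum.inr g.2 ∈ A) := by
  have hab := hD.mutReach (hAD ha) hb
  obtain ⟨v, w, hav, hvA, hvw, hwA, hwb⟩ := hab.1.exists_mem_not_mem ha hbA
  have hwD : w ∈ D := hD.mem_of_mutReach (hAD ha) ⟨hav.tail hvw, hwb.trans hab.2⟩
  obtain ⟨g, hg, ⟨-, rfl, rfl⟩ | ⟨-, rfl, rfl⟩⟩ := hvw
  exacts [⟨g, ⟨hg, hAD hvA, hwD⟩, fun h => hwA (h.1 hvA)⟩,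
    ⟨g, ⟨hg, hwD, hAD hvA⟩, fun h => hwA (h.2 hvA)⟩]

end Components

namespace Table

variable {T : Table R C}

def canRaise (T : Table R C) : Set (R × C) := {e | e ∈ T.sup ∧ T.val e < T.hi e}

def canLower (T : Table R C) : Set (R × C) := {e | e ∈ T.sup ∧ T.lo e < T.val e}

def IsFeasibleDir (T : Table R C) (z : R × C → ℝ) : Prop :=
  (∀ g, 0 < z g → g ∈ T.canRaise) ∧ ∀ g, z g < 0 → g ∈ T.canLower

theorem isFeasibleDir_zero : T.IsFeasibleDir 0 :=
  ⟨fun _ h => absurd h (lt_irrefl 0), fun _ h => absurd h (lt_irrefl 0)⟩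

theorem IsFeasibleDir.add {z w : R × C → ℝ} (hz : T.IsFeasibleDir z)
    (hw : T.IsFeasibleDir w) : T.IsFeasibleDir (z + w) := by
  refine ⟨fun g hg => ?_, fun g hg => ?_⟩
  · rcases lt_or_ge 0 (z g) with h | h
    exacts [hz.1 g h, hw.1 g (by simp only [Pi.add_apply] at hg; linarith)]
  · rcases lt_or_ge (z g) 0 with h | h
    exacts [hz.2 g h, hw.2 g (by simp only [Pi.add_apply] at hg; linarith)]

theorem IsFeasibleDir.sum {ι : Type*} {s : Finset ι} {z : ι → R × C → ℝ}
    (hz : ∀ i ∈ s, T.IsFeasibleDir (z i)) : T.IsFeasibleDir (∑ i ∈ s, z i) :=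
  Finset.sum_induction _ _ (fun _ _ => IsFeasibleDir.add) isFeasibleDir_zero hz

theorem IsFeasibleDir.nonneg {z : R × C → ℝ} (hz : T.IsFeasibleDir z) {g : R × C}
    (hg : ¬T.lo g < T.val g) : 0 ≤ z g :=
  not_lt.1 fun h => hg (hz.2 g h).2

theorem IsFeasibleDir.nonpos {z : R × C → ℝ} (hz : T.IsFeasibleDir z) {g : R × C}
    (hg : ¬T.val g < T.hi g) : z g ≤ 0 :=
  not_lt.1 fun h => hg (hz.1 g h).2

theorem IsFeasibleDir.apply_eq_zero {z : R × C → ℝ} (hz : T.IsFeasibleDir z) {g : R × C}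
    (hg : g ∉ T.sup) : z g = 0 :=
  le_antisymm (not_lt.1 fun h => hg (hz.1 g h).1) (not_lt.1 fun h => hg (hz.2 g h).1)

theorem isFeasibleDir_single [DecidableEq R] [DecidableEq C] {f : R × C}
    (hf : f ∈ T.canRaise) : T.IsFeasibleDir (Pi.single f 1) := by
  refine ⟨fun g hg => ?_, fun g hg => ?_⟩ <;> by_cases hgf : g = f
  · exact hgf ▸ hf
  · simp [hgf] at hg
  · norm_num [hgf] at hg
  · simp [hgf] at hg

theorem isFeasibleDir_neg_single [DecidableEq R] [DecidableEq C] {f : R × C}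
    (hf : f ∈ T.canLower) : T.IsFeasibleDir (-Pi.single f 1) := by
  refine ⟨fun g hg => ?_, fun g hg => ?_⟩ <;> by_cases hgf : g = f
  · norm_num [hgf] at hg
  · simp [hgf] at hg
  · exact hgf ▸ hf
  · simp [hgf] at hg

end Table

section Assignments

variable [Fintype R] [Fintype C] {T : Table R C}

theorem bfa_iff {x : R × C → ℝ} :
    BFA T x ↔ (∀ e, e ∉ T.sup → x e = T.val e) ∧ (∀ e ∈ T.sup, T.lo e ≤ x e ∧ x e ≤ T.hi e) ∧
      netOut x = netOut T.val := by
  simp only [BFA, funext_iff, Sum.forall, netOut_inl, netOut_inr, neg_inj]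

theorem bfa_val (T : Table R C) : BFA T T.val :=
  bfa_iff.2 ⟨fun _ _ => rfl, fun e _ => ⟨T.lo_le e, T.le_hi e⟩, rfl⟩

theorem BFA.netOut_sub {x y : R × C → ℝ} (hx : BFA T x) (hy : BFA T y) : netOut (x - y) = 0 := by
  rw [map_sub, (bfa_iff.1 hx).2.2, (bfa_iff.1 hy).2.2, sub_self]

theorem BFA.mstep_of_val_lt {x : R × C → ℝ} (hx : BFA T x) {g : R × C} (h : T.val g < x g) :
    MStep T T.sup (.inl g.1) (.inr g.2) := by
  have hg : g ∈ T.sup := by_contra fun hg => h.ne' (hx.1 g hg)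
  exact ⟨g, hg, .inl ⟨h.trans_le (hx.2.1 g hg).2, rfl, rfl⟩⟩

theorem BFA.mstep_of_lt_val {x : R × C → ℝ} (hx : BFA T x) {g : R × C} (h : x g < T.val g) :
    MStep T T.sup (.inr g.2) (.inl g.1) := by
  have hg : g ∈ T.sup := by_contra fun hg => h.ne (hx.1 g hg)
  exact ⟨g, hg, .inr ⟨(hx.2.1 g hg).1.trans_lt h, rfl, rfl⟩⟩

theorem BFA.coboundary_indicator_mul_nonpos {x : R × C → ℝ} (hx : BFA T x) {A : Set (R ⊕ C)}
    (hA : ∀ v w, MStep T T.sup v w → v ∈ A → w ∈ A) (g : R × C) :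
    coboundary (A.indicator 1) g * (x - T.val) g ≤ 0 := by
  by_cases hl : Sum.inl g.1 ∈ A <;> by_cases hr : Sum.inr g.2 ∈ A
  · simp [coboundary, hl, hr]
  · have hle : x g ≤ T.val g := not_lt.1 fun h => hr (hA _ _ (hx.mstep_of_val_lt h) hl)
    simpa [coboundary, hl, hr] using hle
  · have hle : T.val g ≤ x g := not_lt.1 fun h => hl (hA _ _ (hx.mstep_of_lt_val h) hr)
    simpa [coboundary, hl, hr] using hle
  · simp [coboundary, hl, hr]

theorem BFA.eq_val_of_not_mem_iff {x : R × C → ℝ} (hx : BFA T x) {A : Set (R ⊕ C)}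
    (hA : ∀ v w, MStep T T.sup v w → v ∈ A → w ∈ A) {g : R × C}
    (hg : ¬(Sum.inl g.1 ∈ A ↔ Sum.inr g.2 ∈ A)) : x g = T.val g := by
  classical
  have hterm := (sum_eq_zero_iff_of_nonpos fun g _ => hx.coboundary_indicator_mul_nonpos hA g).1
    (sum_coboundary_mul_eq_zero (hx.netOut_sub (bfa_val T)) _) g (mem_univ g)
  exact sub_eq_zero.1
    ((mul_eq_zero.1 hterm).resolve_left (coboundary_indicator_eq_zero_iff.not.2 hg))

theorem BFA.mem_movable_of_ne_val {x : R × C → ℝ} (hx : BFA T x) {g : R × C}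
    (hne : x g ≠ T.val g) : g ∈ T.movable := by
  have closed (u : R ⊕ C) : ∀ v w, MStep T T.sup v w →
      v ∈ {w | MReach T T.sup u w} → w ∈ {w | MReach T T.sup u w} :=
    fun _ _ hvw hv => ReflTransGen.tail hv hvw
  refine ⟨by_contra fun h => hne (hx.1 g h), ?_, ?_⟩
  · by_contra h
    exact hne (hx.eq_val_of_not_mem_iff (closed (.inl g.1)) (fun hiff => h (hiff.1 .refl)))
  · by_contra h
    exact hne (hx.eq_val_of_not_mem_iff (closed (.inr g.2)) (fun hiff => h (hiff.2 .refl)))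

end Assignments

section Necessity

variable [Fintype R] [Fintype C] {T : Table R C} {Q : Set (R × C)}

/-- The cut identity restricted to the edges of a component still gives an invariant, because
the cells leaving the component never move. -/
theorem BFA.dotProduct_cut_eq {x : R × C → ℝ} (hx : BFA T x) {D A : Set (R ⊕ C)}
    (hD : IsSCC T T.sup D) (hAD : A ⊆ D) :
    (EdgesIn T.sup D).indicator (coboundary (A.indicator 1)) ⬝ᵥ x =
      (EdgesIn T.sup D).indicator (coboundary (A.indicator 1)) ⬝ᵥ T.val := by
  rw [← sub_eq_zero, ← dotProduct_sub,
    ← sum_coboundary_mul_eq_zero (hx.netOut_sub (bfa_val T)) (A.indicator 1)]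
  refine sum_congr rfl fun g _ => ?_
  by_cases hxg : x g = T.val g
  · simp [hxg]
  by_cases hg : g ∈ EdgesIn T.sup D
  · rw [Set.indicator_of_mem hg]
  obtain ⟨hgsup, hmut⟩ := hx.mem_movable_of_ne_val hxg
  have hl : Sum.inl g.1 ∉ D := fun hl => hg ⟨hgsup, hl, (hD.mem_iff_of_mutReach hmut).1 hl⟩
  have hr : Sum.inr g.2 ∉ D := fun hr => hl ((hD.mem_iff_of_mutReach hmut).2 hr)
  rw [Set.indicator_of_notMem hg, coboundary_indicator_eq_zero_iff.2 (iff_of_false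
    (fun h => hl (hAD h)) (fun h => hr (hAD h))), zero_mul]

theorem not_totallyProtected_of_dotProduct (hQ : Q ⊆ T.sup) {c : R × C → ℝ}
    (hcQ : Function.support c ⊆ Q) (hc : c ≠ 0) (hinv : ∀ x, BFA T x → c ⬝ᵥ x = c ⬝ᵥ T.val) :
    ¬TotallyProtected T Q := by
  classical
  refine not_not.2 ⟨(c ⬝ᵥ ·), Function.support c, entire_dotProduct c, ?_, ?_,
    isEA_dotProduct c, hcQ, Function.support_nonempty_iff.2 hc⟩
  · exact fun x y hxy => dependsOnlyOn_dotProduct c x y fun g hg => hxy g (hQ (hcQ hg))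
  · exact fun x y hx hy => (hinv x hx).trans (hinv y hy).symm

theorem mutReach_of_totallyProtected (hQ : Q ⊆ T.sup) (hTP : TotallyProtected T Q) {e : R × C}
    (he : e ∈ Q) : MutReach T T.sup (.inl e.1) (.inr e.2) := by
  classical
  by_contra h
  refine not_totallyProtected_of_dotProduct hQ (c := Pi.single e 1) ?_ ?_ ?_ hTP
  · simpa [Pi.support_single_of_ne] using he
  · simp
  · intro x hx
    rw [single_one_dotProduct, single_one_dotProduct]
    exact by_contra fun hne => h (hx.mem_movable_of_ne_val hne).2

theorem connectedOn_of_totallyProtected (hQ : Q ⊆ T.sup) (hTP : TotallyProtected T Q)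
    {D : Set (R ⊕ C)} (hD : IsSCC T T.sup D) : ConnectedOn (EdgesIn T.sup D \ Q) D := by
  classical
  intro a ha b hb
  by_contra hab
  set A : Set (R ⊕ C) := {w | Conn (EdgesIn T.sup D \ Q) a w}
  have hAD : A ⊆ D := fun w hw => Conn.mem_of_subset_edgesIn Set.sdiff_subset hw ha
  refine not_totallyProtected_of_dotProduct hQ
    (c := (EdgesIn T.sup D).indicator (coboundary (A.indicator 1))) ?_ ?_
    (fun x hx => hx.dotProduct_cut_eq hD hAD) hTP
  · intro g hg
    rw [Function.mem_support, Set.indicator_apply_ne_zero] at hg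
    by_contra hgQ
    exact coboundary_indicator_eq_zero_iff.not.1 hg.2
      (conn_inl_iff_conn_inr (S := EdgesIn T.sup D \ Q) ⟨hg.1, hgQ⟩)
  · obtain ⟨g, hg, hcross⟩ := hD.exists_edgesIn_not_mem_iff hAD .refl hb hab
    refine Function.ne_iff.2 ⟨g, ?_⟩
    rw [Set.indicator_of_mem hg]
    exact coboundary_indicator_eq_zero_iff.not.2 hcross

end Necessity

section Sufficiency

variable [Fintype R] [Fintype C] {T : Table R C} {Q : Set (R × C)}

theorem MReach.exists_isFeasibleDir [DecidableEq R] [DecidableEq C] {a b : R ⊕ C}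
    (h : MReach T T.sup a b) :
    ∃ z, netOut z = Pi.single a 1 - Pi.single b 1 ∧ T.IsFeasibleDir z := by
  obtain ⟨z, hz, hP, hN⟩ := exists_netOut_eq_of_reflTransGen (P := T.canRaise)
    (N := T.canLower) (fun _ _ ⟨e, he, h⟩ =>
      ⟨e, h.imp (fun h => ⟨⟨he, h.1⟩, h.2⟩) (fun h => ⟨⟨he, h.1⟩, h.2⟩)⟩) h
  exact ⟨z, hz, hP, hN⟩

theorem exists_isFeasibleDir_inward [DecidableEq R] [DecidableEq C] {f : R × C}
    (hf : f ∈ T.movable) : ∃ z, netOut z = 0 ∧ T.IsFeasibleDir z ∧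
      (T.lo f < T.val f ∨ 0 < z f) ∧ (T.val f < T.hi f ∨ z f < 0) := by
  by_cases hlo : T.lo f < T.val f
  · by_cases hhi : T.val f < T.hi f
    · exact ⟨0, map_zero _, Table.isFeasibleDir_zero, .inl hlo, .inl hhi⟩
    obtain ⟨w, hw, hwT⟩ := hf.2.1.exists_isFeasibleDir
    refine ⟨w + -Pi.single f 1, by rw [map_add, map_neg, hw, netOut_single]; abel,
      hwT.add (Table.isFeasibleDir_neg_single ⟨hf.1, hlo⟩), .inl hlo, .inr ?_⟩
    simp only [Pi.add_apply, Pi.neg_apply, Pi.single_eq_same]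
    linarith [hwT.nonpos hhi]
  · have hhi : T.val f < T.hi f := (not_lt.1 hlo).trans_lt (T.lo_lt_hi f)
    obtain ⟨w, hw, hwT⟩ := hf.2.2.exists_isFeasibleDir
    refine ⟨w + Pi.single f 1, by rw [map_add, hw, netOut_single]; abel,
      hwT.add (Table.isFeasibleDir_single ⟨hf.1, hhi⟩), .inr ?_, .inl hhi⟩
    simp only [Pi.add_apply, Pi.single_eq_same]
    linarith [hwT.nonneg hlo]

theorem Table.IsFeasibleDir.eventually_bfa {z : R × C → ℝ} (hzT : T.IsFeasibleDir z)
    (hz : netOut z = 0) {G : Set (R × C)}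
    (hG : ∀ g ∈ G, (T.lo g < T.val g ∨ 0 < z g) ∧ (T.val g < T.hi g ∨ z g < 0)) :
    ∀ᶠ t in 𝓝[>] (0 : ℝ), BFA T (T.val + t • z) ∧
      ∀ g ∈ G, (T.val + t • z) g ∈ Set.Ioo (T.lo g) (T.hi g) := by
  have hinward : ∀ g, z g ≠ 0 ∨ g ∈ G →
      (T.lo g < T.val g ∨ 0 < z g) ∧ (T.val g < T.hi g ∨ z g < 0) := by
    rintro g (hg | hg)
    · rcases hg.lt_or_gt with h | h
      exacts [⟨.inl (hzT.2 g h).2, .inr h⟩, ⟨.inr h, .inl (hzT.1 g h).2⟩]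
    · exact hG g hg
  have hcells : ∀ᶠ t in 𝓝[>] (0 : ℝ), ∀ g, z g ≠ 0 ∨ g ∈ G →
      (T.val + t • z) g ∈ Set.Ioo (T.lo g) (T.hi g) :=
    eventually_all.2 fun g => eventually_imp_distrib_left.2 fun hg =>
      eventually_mem_Ioo_add_mul (T.lo_le g) (T.le_hi g) (hinward g hg).1 (hinward g hg).2
  filter_upwards [hcells] with t ht
  refine ⟨bfa_iff.2 ⟨fun g hg => by simp [hzT.apply_eq_zero hg], fun g _ => ?_, ?_⟩,
    fun g hg => ht g (.inr hg)⟩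
  · by_cases hzg : z g = 0
    · simp [hzg, T.lo_le g, T.le_hi g]
    · exact Set.Ioo_subset_Icc_self (ht g (.inl hzg))
  · rw [map_add, map_smul, hz, smul_zero, add_zero]

theorem exists_bfa_forall_movable_mem_Ioo (T : Table R C) :
    ∃ x, BFA T x ∧ ∀ g ∈ T.movable, x g ∈ Set.Ioo (T.lo g) (T.hi g) := by
  classical
  choose! w hw hwT hwlo hwhi using fun f (hf : f ∈ T.movable) => exists_isFeasibleDir_inward hf
  set M := univ.filter (· ∈ T.movable)
  have hM {f : R × C} (hf : f ∈ M) : f ∈ T.movable := (mem_filter.1 hf).2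
  have hsum : T.IsFeasibleDir (∑ f ∈ M, w f) := Table.IsFeasibleDir.sum fun f hf => hwT f (hM hf)
  -- A cell at a bound is moved the same way by every feasible direction, so no cancellation.
  have hinward : ∀ g ∈ T.movable, (T.lo g < T.val g ∨ 0 < (∑ f ∈ M, w f) g) ∧
      (T.val g < T.hi g ∨ (∑ f ∈ M, w f) g < 0) := by
    intro g hg
    have hgM : g ∈ M := mem_filter.2 ⟨mem_univ g, hg⟩
    rw [Finset.sum_apply, ← neg_pos, ← sum_neg_distrib]
    refine ⟨(em _).imp_right fun hlo => ?_, (em _).imp_right fun hhi => ?_⟩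
    · exact sum_pos' (fun f hf => (hwT f (hM hf)).nonneg hlo)
        ⟨g, hgM, (hwlo g hg).resolve_left hlo⟩
    · exact sum_pos' (fun f hf => neg_nonneg.2 ((hwT f (hM hf)).nonpos hhi))
        ⟨g, hgM, neg_pos.2 ((hwhi g hg).resolve_left hhi)⟩
  have hcirc : netOut (∑ f ∈ M, w f) = 0 := by
    rw [map_sum]; exact sum_eq_zero fun f hf => hw f (hM hf)
  obtain ⟨t, hx, hint⟩ := (hsum.eventually_bfa hcirc hinward).exists
  exact ⟨_, hx, hint⟩

theorem exists_circulation_eqOn_single [DecidableEq R] [DecidableEq C] (hQ : Q ⊆ T.sup)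
    (h1 : ∀ e ∈ Q, MutReach T T.sup (.inl e.1) (.inr e.2))
    (h2 : ∀ D, IsSCC T T.sup D → ConnectedOn (EdgesIn T.sup D \ Q) D) (e : R × C) :
    ∃ z, netOut z = 0 ∧ Function.support z ⊆ T.movable ∧ Set.EqOn z (Pi.single e 1) Q := by
  by_cases he : e ∈ Q
  swap
  · exact ⟨0, map_zero _, by simp, fun g hg => by simp [ne_of_mem_of_not_mem hg he]⟩
  set D := {w | MutReach T T.sup (.inl e.1) w}
  have hD : IsSCC T T.sup D := ⟨_, rfl⟩
  obtain ⟨w, hw, hwpos, hwneg⟩ := exists_netOut_eq_of_reflTransGen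
    (P := EdgesIn T.sup D \ Q) (N := EdgesIn T.sup D \ Q)
    (fun _ _ ⟨g, hg, h⟩ => ⟨g, h.imp (⟨hg, ·⟩) (⟨hg, ·⟩)⟩)
    (h2 D hD _ (h1 e he) _ (mutReach_equivalence.refl _))
  have hwS (g : R × C) (hg : w g ≠ 0) : g ∈ EdgesIn T.sup D \ Q :=
    hg.lt_or_gt.elim (hwneg g) (hwpos g)
  refine ⟨w + Pi.single e 1, by rw [map_add, hw, netOut_single]; abel, fun g hg => ?_,
    fun g hg => ?_⟩
  · by_cases hge : g = e
    · exact hge ▸ ⟨hQ he, h1 e he⟩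
    · obtain ⟨⟨hgs, hgl, hgr⟩, -⟩ := hwS g (by simpa [hge] using hg)
      exact ⟨hgs, hD.mutReach hgl hgr⟩
  · have hwg : w g = 0 := by_contra fun h => (hwS g h).2 hg
    simp [hwg]

theorem eventually_bfa_add_sum_smul {xb : R × C → ℝ} (hxb : BFA T xb)
    (hint : ∀ g ∈ T.movable, xb g ∈ Set.Ioo (T.lo g) (T.hi g)) {z : R × C → R × C → ℝ}
    (hz : ∀ e, netOut (z e) = 0) (hzm : ∀ e, Function.support (z e) ⊆ T.movable) :
    ∀ᶠ u in 𝓝 xb, BFA T (xb + ∑ e, (u e - xb e) • z e) := by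
  set Φ : (R × C → ℝ) → R × C → ℝ := fun u => xb + ∑ e, (u e - xb e) • z e
  have hfix (u : R × C → ℝ) (g : R × C) (hg : g ∉ T.movable) : Φ u g = xb g := by
    simp [Φ, Finset.sum_apply, fun e => Function.notMem_support.1 fun h => hg (hzm e h)]
  have hcells : ∀ᶠ u in 𝓝 xb, ∀ g ∈ T.movable, Φ u g ∈ Set.Ioo (T.lo g) (T.hi g) := by
    refine eventually_all.2 fun g => eventually_imp_distrib_left.2 fun hg => ?_
    have hcont : Continuous fun u => Φ u g := by fun_prop
    exact hcont.continuousAt.eventually_mem (isOpen_Ioo.mem_nhds (by simpa [Φ] using hint g hg))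
  filter_upwards [hcells] with u hu
  obtain ⟨hoff, hbd, hnet⟩ := bfa_iff.1 hxb
  change BFA T (Φ u)
  refine bfa_iff.2 ⟨fun g hg => (hfix u g fun h => hg h.1).trans (hoff g hg), fun g hg => ?_, ?_⟩
  · by_cases hgm : g ∈ T.movable
    · exact Set.Ioo_subset_Icc_self (hu g hgm)
    · rw [hfix u g hgm]; exact hbd g hg
  · simp [Φ, map_sum, hz, hnet]

theorem totallyProtected_of_eventually_exists_bfa_eqOn {xb : R × C → ℝ} (hxb : BFA T xb)
    (h : ∀ᶠ u in 𝓝 xb, ∃ x, BFA T x ∧ Set.EqOn x u Q) : TotallyProtected T Q := by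
  rintro ⟨F, S, hF, -, hinv, ⟨hdep, hmin⟩, hSQ, g, hg⟩
  have hloc : ∀ᶠ u in 𝓝 xb, F u = F xb := h.mono fun u ⟨x, hx, hxu⟩ =>
    (hdep u x fun e he => (hxu (hSQ he)).symm).trans (hinv x xb hx hxb)
  exact hmin ∅ (fun x y _ => (hF.eq_of_eventually_eq hloc x).trans
    (hF.eq_of_eventually_eq hloc y).symm) hg

theorem totallyProtected_of_connectedOn (hQ : Q ⊆ T.sup)
    (h1 : ∀ e ∈ Q, MutReach T T.sup (.inl e.1) (.inr e.2))
    (h2 : ∀ D, IsSCC T T.sup D → ConnectedOn (EdgesIn T.sup D \ Q) D) : TotallyProtected T Q := by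
  classical
  obtain ⟨xb, hxb, hint⟩ := exists_bfa_forall_movable_mem_Ioo T
  choose z hz hzm hzQ using exists_circulation_eqOn_single hQ h1 h2
  refine totallyProtected_of_eventually_exists_bfa_eqOn hxb
    ((eventually_bfa_add_sum_smul hxb hint hz hzm).mono fun u hu => ⟨_, hu, fun g hg => ?_⟩)
  simp [Finset.sum_apply, hzQ _ hg, Pi.single_apply]

end Sufficiency

theorem stmt5_general [Fintype R] [Fintype C]
    (T : Table R C) (Q : Set (R × C)) (hQ : Q ⊆ T.sup) :
    TotallyProtected T Q ↔
      ((∀ e ∈ Q, MutReach T T.sup (Sum.inl e.1) (Sum.inr e.2)) ∧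
       (∀ D : Set (R ⊕ C), IsSCC T T.sup D →
          ConnectedOn (EdgesIn T.sup D \ Q) D)) :=
  ⟨fun hTP => ⟨fun _ he => mutReach_of_totallyProtected hQ hTP he,
      fun _ hD => connectedOn_of_totallyProtected hQ hTP hD⟩,
    fun ⟨h1, h2⟩ => totallyProtected_of_connectedOn hQ h1 h2⟩

/-- `Q` is totally protected iff (1) every edge of `Q` has mutually reachable
endpoints in the suppressed graph, and (2) every strongly connected component
remains connected (direction-blind) after removing the edges of `Q`. -/
theorem stmt5 [Fintype R] [Fintype C] [Nonempty R] [Nonempty C]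
    (T : Table R C) (Q : Set (R × C)) (hQ : Q ⊆ T.sup) :
    TotallyProtected T Q ↔
      ((∀ e ∈ Q, MutReach T T.sup (Sum.inl e.1) (Sum.inr e.2)) ∧
       (∀ D : Set (R ⊕ C), IsSCC T T.sup D →
          ConnectedOn (EdgesIn T.sup D \ Q) D)) :=
  stmt5_general T Q hQ
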